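/- Assume m ≥ 2. For every n ≥ 1, every 2 ≤ k ≤ m, and every j ≥ 0, #{p ∈ PK(n) : ω_k(p) = j} = #{p ∈ PK(n) : luck(p) = j + 1}; that is, each statistic ω_k + 1 (for 2 ≤ k ≤ m) is equidistributed with luck on PK(n). -/

import Mathlib

open scoped Classical
open Finset

noncomputable section

/-- The set of positive nondecreasing sequences of length `n` bounded above by `b` is finite. -/
lemma boundedSeq_finite (n : ℕ) (b : ℕ → ℕ) :
    {p : Fin n → ℕ | Monotone p ∧ ∀ i : Fin n, 1 ≤ p i ∧ p i ≤ b i}.Finite := by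
  have h : {p : Fin n → ℕ | Monotone p ∧ ∀ i : Fin n, 1 ≤ p i ∧ p i ≤ b i} ⊆
      Set.pi Set.univ (fun i : Fin n => Set.Iic (b i)) := by
    intro p hp
    rw [Set.mem_pi]
    intro i _
    exact (hp.2 i).2
  exact (Set.Finite.pi fun i : Fin n => Set.finite_Iic (b (i : ℕ))).subset h

/-- The finset of nondecreasing sequences `p : Fin n → ℕ` of positive integers
with `p i ≤ b i` for all `i`. -/
def BSeq (n : ℕ) (b : ℕ → ℕ) : Finset (Fin n → ℕ) := (boundedSeq_finite n b).toFinset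

/-- `PK m n` : the u-parking distributions of length `n`, i.e. nondecreasing sequences
of positive integers with `p i ≤ m*(i-1)+1` (here indexed from `0`, so `p i ≤ m*i+1`). -/
def PK (m n : ℕ) : Finset (Fin n → ℕ) := BSeq n (fun i => m * i + 1)

/-- `luck p` : the number of indices `i` with `p i = m*(i-1)+1` (0-indexed: `m*i+1`). -/
def luck (m : ℕ) {n : ℕ} (p : Fin n → ℕ) : ℕ :=
  (Finset.univ.filter (fun i : Fin n => p i = m * (i : ℕ) + 1)).card

/-- `freq j p` = `ω_j(p)` : the number of indices `i` with `p i = j`. -/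
def freq (j : ℕ) {n : ℕ} (p : Fin n → ℕ) : ℕ :=
  (Finset.univ.filter (fun i : Fin n => p i = j)).card

/-- `hcnt m n k r` = `h_{n,k,r}` : the number of nondecreasing sequences of positive
integers with `p_i ≤ m*(i+k-1) - r` for `1 ≤ i ≤ n` (0-indexed: `p i ≤ m*(i+k) - r`). -/
def hcnt (m n k r : ℕ) : ℕ := (BSeq n (fun i => m * (i + k) - r)).card

/-- `Cnt m n k` = `C_{n,k}` : the number of `p ∈ PK m n` with `luck p = k`. -/
def Cnt (m n k : ℕ) : ℕ := ((PK m n).filter (fun p => luck m p = k)).card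

/-- `Rpoly m n` = `R_n(q) = Σ_k C_{n,k} q^k ∈ ℤ[q]`. -/
def Rpoly (m n : ℕ) : Polynomial ℤ :=
  ∑ k ∈ Finset.range (n + 1), (Cnt m n k : Polynomial ℤ) * Polynomial.X ^ k

/-- `hfull t k` : the complete homogeneous symmetric polynomial of degree `k`
in variables `q_0, …, q_{t-1}`, i.e. the sum of all monomials of total degree `k`. -/
def hfull (t k : ℕ) : MvPolynomial (Fin t) ℤ :=
  ∑ α ∈ Finset.Nat.antidiagonalTuple t k, ∏ i : Fin t, MvPolynomial.X i ^ α i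

/-- `ffix m p ℓ` = `i_ℓ(p)` : the first fixed point of type `ℓ`, the smallest `k` with
`2 ≤ k ≤ n` and `p_k ≥ m*(k-2)+1+ℓ` (1-indexed), or `n+1` if there is none. -/
def ffix (m : ℕ) {n : ℕ} (p : Fin n → ℕ) (ℓ : ℕ) : ℕ :=
  sInf ({k | 2 ≤ k ∧ ∃ i : Fin n, (i : ℕ) + 1 = k ∧ m * (k - 2) + 1 + ℓ ≤ p i} ∪ {n + 1})

/-- The extended first fixed points: `i_0 = 2`, `i_{m+1} = n+1`, and `i_ℓ = ffix m p ℓ`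
for `1 ≤ ℓ ≤ m`. -/
def ffixE (m : ℕ) {n : ℕ} (p : Fin n → ℕ) (j : ℕ) : ℕ :=
  if j = 0 then 2 else if j = m + 1 then n + 1 else ffix m p j

/-- `pget p k` = `p_k` (1-indexed), `0` out of range. -/
def pget {n : ℕ} (p : Fin n → ℕ) (k : ℕ) : ℕ := if h : k - 1 < n then p ⟨k - 1, h⟩ else 0

/-- The `(ℓ+1)`-st part `P_{ℓ+1}` (for `0 ≤ ℓ ≤ m`) of the first-return decomposition of `p`:
the list `(p_k - (p_{i_ℓ} - 1))` for `i_ℓ ≤ k ≤ i_{ℓ+1} - 1`. -/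
def FRD (m : ℕ) {n : ℕ} (p : Fin n → ℕ) (ℓ : ℕ) : List ℕ :=
  (List.range (ffixE m p (ℓ + 1) - ffixE m p ℓ)).map
    (fun t => pget p (ffixE m p ℓ + t) - (pget p (ffixE m p ℓ) - 1))

/-- A list is a u-parking distribution: nondecreasing, with `l.get i ∈ [1, m*i+1]`
(0-indexed). -/
def isPKlist (m : ℕ) (l : List ℕ) : Prop :=
  l.Pairwise (· ≤ ·) ∧ ∀ i : Fin l.length, 1 ≤ l.get i ∧ l.get i ≤ m * (i : ℕ) + 1

/-- `θ(p)` : the nondecreasing rearrangement of the concatenation of `p` with the list of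
all `j ∈ {1, …, m*n-m+1}` with `j ≢ 1 (mod m)`. -/
def theta (m n : ℕ) (p : Fin n → ℕ) : List ℕ :=
  Multiset.sort
    ((List.ofFn p : Multiset ℕ) +
      (((List.range (m * n - m + 1)).map (· + 1)).filter
        (fun j => ¬ j ≡ 1 [MOD m]) : List ℕ)) (· ≤ ·)

/-- Parking distributions on the `m`-caterpillar of length `n`, as nondecreasing lists. -/
def PKcat (m n : ℕ) : Set (List ℕ) :=
  {a | a.length = m * n - m + 1 ∧ a.Pairwise (· ≤ ·) ∧
       (∀ x ∈ a, 1 ≤ x ∧ x ≤ m * n - m + 1) ∧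
       (∀ i : ℕ, 1 ≤ i → i ≤ n →
         m * (i - 1) + 1 ≤ (a.filter (fun x => x ≤ m * (i - 1) + 1)).length) ∧
       (∀ j : ℕ, 1 ≤ j → j ≤ m * n - m + 1 → ¬ j ≡ 1 [MOD m] → j ∈ a)}

/-!
Both statistics are counted by deleting entries one at a time. Let `T(d, c)` (`shiftedPK m c d`)
be the nondecreasing positive sequences of length `d` with `q_t ≤ m(t + c) + 1` (0-indexed), so
that `PK(n) = T(n, 0)`. Deleting any entry of a sequence in `T(d + 1, c)` lands in `T(d, c + 1)`.
For a nondecreasing threshold `g`, deleting the entry `q_i = g(i)` where `q` first meets `g` is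
undone by inserting `g(i)` at the first place `i` where the shorter sequence reaches `g`:
* `g(t) = m(t + c) + 1` deletes the first lucky entry (for the shift `c`), lowering that luck by 1;
* the constant `g = k ≤ m` (allowed once `c ≥ 1`) deletes the first `k`, lowering `ω_k` by 1.
Deleting the leading `1` of `p ∈ PK(n)` and then `j` copies of `k`, resp. the first `j + 1` lucky
entries, both give `#T(n - j - 1, j + 1)`. Hence `#{ω_k ≥ j} = #{luck ≥ j + 1}` for every `j`, and
the theorem follows by taking differences.
-/

namespace Fin

lemma monotone_insertNth {α : Type*} [Preorder α] {n : ℕ} {i : Fin (n + 1)} {x : α}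
    {f : Fin n → α} (hf : Monotone f) (hlt : ∀ t, t.castSucc < i → f t ≤ x)
    (hge : ∀ t, i ≤ t.castSucc → x ≤ f t) : Monotone (i.insertNth x f) := by
  intro a b hab
  induction a using Fin.succAboveCases i with
  | x =>
    induction b using Fin.succAboveCases i with
    | x => simp
    | p t =>
      rw [insertNth_apply_same, insertNth_apply_succAbove]
      exact hge t ((lt_succAbove_iff_le_castSucc i t).1
        (lt_of_le_of_ne hab (succAbove_ne i t).symm))
  | p s =>
    induction b using Fin.succAboveCases i with
    | x =>
      rw [Fin.insertNth_apply_same, Fin.insertNth_apply_succAbove]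
      exact hlt s ((succAbove_lt_iff_castSucc_lt i s).1 (lt_of_le_of_ne hab (succAbove_ne i s)))
    | p t =>
      simp only [Fin.insertNth_apply_succAbove]
      exact hf ((Fin.strictMono_succAbove i).le_iff_le.1 hab)

lemma card_filter_insertNth {α : Type*} {n : ℕ} (P : Fin (n + 1) → α → Prop)
    [∀ t a, Decidable (P t a)] (i : Fin (n + 1)) (x : α) (f : Fin n → α) :
    #{t | P t (i.insertNth (α := fun _ => α) x f t)} =
      (if P i x then 1 else 0) + #{t | P (i.succAbove t) (f t)} := by
  simp only [Finset.card_filter]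
  rw [Fin.sum_univ_succAbove _ i]
  simp only [Fin.insertNth_apply_same, Fin.insertNth_apply_succAbove]

lemma val_succAbove_le {n : ℕ} (i : Fin (n + 1)) (t : Fin n) : (i.succAbove t : ℕ) ≤ t + 1 := by
  rcases lt_or_ge t.castSucc i with h | h
  · simp [Fin.succAbove_of_castSucc_lt _ _ h]
  · simp [Fin.succAbove_of_le_castSucc _ _ h]

end Fin

namespace Finset

lemma card_filter_le_eq_add {α : Type*} (s : Finset α) (f : α → ℕ) (j : ℕ) :
    #{a ∈ s | j ≤ f a} = #{a ∈ s | f a = j} + #{a ∈ s | j + 1 ≤ f a} := by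
  rw [← card_union_of_disjoint (disjoint_filter.2 fun _ _ h₁ h₂ => by omega)]
  congr 1
  ext a
  simp only [mem_union, mem_filter, ← and_or_left]
  exact and_congr_right fun _ => by omega

end Finset

namespace UParking

lemma mem_BSeq {n : ℕ} {b : ℕ → ℕ} {p : Fin n → ℕ} :
    p ∈ BSeq n b ↔ Monotone p ∧ ∀ i : Fin n, 1 ≤ p i ∧ p i ≤ b i :=
  (boundedSeq_finite n b).mem_toFinset

section Reach

variable (g : ℕ → ℕ) {d : ℕ}

/-- The first position at which `f` reaches the threshold `g`, or `Fin.last d` if it never does. -/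
def reachIdx (f : Fin d → ℕ) : Fin (d + 1) :=
  Fin.find (fun i => ∀ t : Fin d, t.castSucc = i → g t ≤ f t)
    ⟨Fin.last d, fun t ht => absurd ht (Fin.castSucc_ne_last t)⟩

def reachInsert (f : Fin d → ℕ) : Fin (d + 1) → ℕ :=
  (reachIdx g f).insertNth (g (reachIdx g f)) f

variable {g}

lemma reachIdx_eq_iff {f : Fin d → ℕ} {i : Fin (d + 1)} :
    reachIdx g f = i ↔
      (∀ t : Fin d, t.castSucc < i → f t < g t) ∧ ∀ t : Fin d, t.castSucc = i → g t ≤ f t := by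
  rw [reachIdx, Fin.find_eq_iff]
  refine and_comm.trans (and_congr_left fun _ => ⟨fun h t ht => ?_, fun h j hj hreach => ?_⟩)
  · by_contra hle
    exact h _ ht fun t' ht' => (Fin.castSucc_injective d ht' ▸ le_of_not_gt hle)
  · obtain ⟨t, rfl⟩ := Fin.exists_castSucc_eq.2 (Fin.ne_last_of_lt hj)
    exact (h t hj).not_ge (hreach t rfl)

lemma lt_of_castSucc_lt_reachIdx {f : Fin d → ℕ} {t : Fin d} (ht : t.castSucc < reachIdx g f) :
    f t < g t :=
  (reachIdx_eq_iff.1 rfl).1 t ht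

lemma le_of_castSucc_eq_reachIdx {f : Fin d → ℕ} {t : Fin d} (ht : t.castSucc = reachIdx g f) :
    g t ≤ f t :=
  (reachIdx_eq_iff.1 rfl).2 t ht

lemma reachIdx_reachInsert (f : Fin d → ℕ) :
    reachIdx g (reachInsert g f) = (reachIdx g f).castSucc := by
  refine reachIdx_eq_iff.2 ⟨fun t ht => ?_, fun t ht => ?_⟩
  · rw [Fin.castSucc_lt_castSucc_iff] at ht
    obtain ⟨t, rfl⟩ := Fin.exists_castSucc_eq.2 (Fin.ne_last_of_lt ht)
    rw [reachInsert, ← Fin.succAbove_of_castSucc_lt _ _ ht, Fin.insertNth_apply_succAbove,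
      Fin.succAbove_of_castSucc_lt _ _ ht]
    simpa using lt_of_castSucc_lt_reachIdx ht
  · rw [Fin.castSucc_inj.1 ht, reachInsert, Fin.insertNth_apply_same]

lemma reachInsert_injective : Function.Injective (reachInsert g (d := d)) := by
  intro f₁ f₂ h
  have hidx : reachIdx g f₁ = reachIdx g f₂ :=
    Fin.castSucc_injective _ (by rw [← reachIdx_reachInsert, h, reachIdx_reachInsert])
  calc f₁ = (reachIdx g f₁).removeNth (reachInsert g f₁) := by simp [reachInsert]
    _ = (reachIdx g f₂).removeNth (reachInsert g f₂) := by rw [hidx, h]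
    _ = f₂ := by simp [reachInsert]

lemma reachInsert_removeNth {q : Fin (d + 1) → ℕ} (hq : Monotone q) {i : Fin (d + 1)}
    (hlt : ∀ t < i, q t < g t) (heq : q i = g i) : reachInsert g (i.removeNth q) = q := by
  have hidx : reachIdx g (i.removeNth q) = i := by
    refine reachIdx_eq_iff.2 ⟨fun t ht => ?_, fun t ht => ?_⟩
    · simpa [Fin.removeNth, Fin.succAbove_of_castSucc_lt _ _ ht] using hlt _ ht
    · subst ht
      simpa [Fin.removeNth, heq] using hq (Fin.castSucc_le_succ t)
  rw [reachInsert, hidx, ← heq, Fin.insertNth_self_removeNth]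

lemma removeNth_mem_BSeq {b : ℕ → ℕ} (hb : Monotone b) {q : Fin (d + 1) → ℕ}
    (hq : q ∈ BSeq (d + 1) b) (i : Fin (d + 1)) : i.removeNth q ∈ BSeq d (fun t => b (t + 1)) := by
  rw [mem_BSeq] at hq ⊢
  exact ⟨hq.1.comp (Fin.strictMono_succAbove i).monotone,
    fun t => ⟨(hq.2 _).1, (hq.2 _).2.trans (hb (Fin.val_succAbove_le i t))⟩⟩

lemma reachInsert_mem_BSeq {b : ℕ → ℕ} (hg : Monotone g) (hg1 : ∀ t, 1 ≤ g t)
    (hgb : ∀ t, g t ≤ b t) {f : Fin d → ℕ} (hf : f ∈ BSeq d (fun t => b (t + 1))) :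
    reachInsert g f ∈ BSeq (d + 1) b := by
  rw [mem_BSeq] at hf ⊢
  refine ⟨Fin.monotone_insertNth hf.1 (fun t ht => ?_) (fun t ht => ?_), fun i => ?_⟩
  · exact (lt_of_castSucc_lt_reachIdx ht).le.trans (hg (Fin.lt_def.1 ht).le)
  · obtain ⟨s, hs⟩ := Fin.exists_castSucc_eq.2 (Fin.ne_last_of_lt (lt_of_le_of_lt ht
      (Fin.castSucc_lt_last t)))
    rw [← hs, Fin.castSucc_le_castSucc_iff] at ht
    simpa [← hs] using (le_of_castSucc_eq_reachIdx hs).trans (hf.1 ht)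
  · induction i using Fin.succAboveCases (reachIdx g f) with
    | x => simpa [reachInsert] using ⟨hg1 _, hgb _⟩
    | p t =>
      rw [reachInsert, Fin.insertNth_apply_succAbove]
      refine ⟨(hf.2 t).1, ?_⟩
      rcases lt_or_ge t.castSucc (reachIdx g f) with h | h
      · simpa [Fin.succAbove_of_castSucc_lt _ _ h] using
          (lt_of_castSucc_lt_reachIdx h).le.trans (hgb t)
      · simpa [Fin.succAbove_of_le_castSucc _ _ h] using (hf.2 t).2

lemma card_filter_BSeq_succ {b : ℕ → ℕ} (hb : Monotone b) (hg : Monotone g)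
    (hg1 : ∀ t, 1 ≤ g t) (hgb : ∀ t, g t ≤ b t) {P : (Fin (d + 1) → ℕ) → Prop}
    {Q : (Fin d → ℕ) → Prop} [DecidablePred P] [DecidablePred Q]
    (hPQ : ∀ f, P (reachInsert g f) ↔ Q f)
    (hreach : ∀ q ∈ BSeq (d + 1) b, P q → ∃ i, (∀ t < i, q t < g t) ∧ q i = g i) :
    #{q ∈ BSeq (d + 1) b | P q} = #{f ∈ BSeq d (fun t => b (t + 1)) | Q f} := by
  symm
  refine card_bij (fun f _ => reachInsert g f) (fun f hf => ?_)
    (fun _ _ _ _ h => reachInsert_injective h) (fun q hq => ?_)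
  · rw [mem_filter] at hf ⊢
    exact ⟨reachInsert_mem_BSeq hg hg1 hgb hf.1, (hPQ f).2 hf.2⟩
  · rw [mem_filter] at hq
    obtain ⟨i, hlt, heq⟩ := hreach q hq.1 hq.2
    have hins := reachInsert_removeNth (mem_BSeq.1 hq.1).1 hlt heq
    refine ⟨i.removeNth q, mem_filter.2 ⟨removeNth_mem_BSeq hb hq.1 i, (hPQ _).1 ?_⟩, hins⟩
    rw [hins]
    exact hq.2

end Reach

def shiftedPK (m c d : ℕ) : Finset (Fin d → ℕ) := BSeq d (fun t => m * (t + c) + 1)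

def shiftedLuck (m c : ℕ) {d : ℕ} (q : Fin d → ℕ) : ℕ := #{t | q t = m * (t + c) + 1}

section Shifted

variable {m c d : ℕ}

lemma shiftedPK_zero {n : ℕ} : shiftedPK m 0 n = PK m n := by
  simp [shiftedPK, PK]

lemma shiftedLuck_zero {n : ℕ} (p : Fin n → ℕ) : shiftedLuck m 0 p = luck m p := by
  simp [shiftedLuck, luck]

lemma shiftedPK_succ : shiftedPK m (c + 1) d = BSeq d (fun t => m * (t + 1 + c) + 1) := by
  simp only [shiftedPK, add_assoc, add_comm 1 c]

lemma shiftedLuck_reachInsert (f : Fin d → ℕ) :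
    shiftedLuck m c (reachInsert (fun t => m * (t + c) + 1) f) = shiftedLuck m (c + 1) f + 1 := by
  rw [shiftedLuck, reachInsert, Fin.card_filter_insertNth (fun t a => a = m * (t + c) + 1),
    if_pos rfl, add_comm, shiftedLuck]
  congr 2
  ext t
  simp only [mem_filter, mem_univ, true_and]
  rcases lt_or_ge t.castSucc (reachIdx (fun t => m * (t + c) + 1) f) with h | h
  · have hlt := lt_of_castSucc_lt_reachIdx h
    have hmono : m * (t + c) ≤ m * (t + (c + 1)) := Nat.mul_le_mul_left _ (by omega)
    simp only [Fin.succAbove_of_castSucc_lt _ _ h, Fin.val_castSucc] at hlt ⊢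
    omega
  · simp only [Fin.succAbove_of_le_castSucc _ _ h, Fin.val_succ, add_assoc, add_comm 1 c]

lemma freq_reachInsert_const (k v : ℕ) (f : Fin d → ℕ) :
    freq k (reachInsert (fun _ => v) f) = freq k f + if v = k then 1 else 0 := by
  rw [freq, reachInsert, Fin.card_filter_insertNth (fun _ a => a = k), add_comm, freq]

lemma card_shiftedLuck_succ (s : ℕ) :
    #{q ∈ shiftedPK m c (d + 1) | s + 1 ≤ shiftedLuck m c q} =
      #{f ∈ shiftedPK m (c + 1) d | s ≤ shiftedLuck m (c + 1) f} := by
  have hg : Monotone fun t => m * (t + c) + 1 := fun a b h => by simp only; gcongr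
  rw [shiftedPK_succ, shiftedPK]
  refine card_filter_BSeq_succ hg hg (fun _ => le_add_self) (fun _ => le_rfl)
    (fun f => by rw [shiftedLuck_reachInsert]; omega) (fun q hq hluck => ?_)
  have hex : ∃ t, q t = m * (t + c) + 1 := by
    simpa [shiftedLuck, filter_nonempty_iff] using card_pos.1 (by omega : 0 < shiftedLuck m c q)
  exact ⟨Fin.find _ hex,
    fun t ht => lt_of_le_of_ne ((mem_BSeq.1 hq).2 t).2 (Fin.find_min hex ht), Fin.find_spec hex⟩

lemma card_freq_succ {k : ℕ} (hk : 1 ≤ k) (hkm : k ≤ m) (hc : 1 ≤ c) (j : ℕ) :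
    #{q ∈ shiftedPK m c (d + 1) | j + 1 ≤ freq k q} =
      #{f ∈ shiftedPK m (c + 1) d | j ≤ freq k f} := by
  have hb : Monotone fun t => m * (t + c) + 1 := fun a b h => by simp only; gcongr
  rw [shiftedPK_succ, shiftedPK]
  refine card_filter_BSeq_succ hb monotone_const (fun _ => hk)
    (fun t => hkm.trans (le_add_right (Nat.le_mul_of_pos_right m (by omega))))
    (fun f => by rw [freq_reachInsert_const, if_pos rfl]; omega) (fun q hq hfreq => ?_)
  have hex : ∃ t, q t = k := by
    simpa [freq, filter_nonempty_iff] using card_pos.1 (by omega : 0 < freq k q)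
  refine ⟨Fin.find _ hex, fun t ht => ?_, Fin.find_spec hex⟩
  exact lt_of_le_of_ne (Fin.find_spec hex ▸ (mem_BSeq.1 hq).1 ht.le) (Fin.find_min hex ht)

lemma card_PK_freq_succ {k : ℕ} (hk : 2 ≤ k) (j : ℕ) :
    #{p ∈ PK m (d + 1) | j ≤ freq k p} = #{f ∈ shiftedPK m 1 d | j ≤ freq k f} := by
  have hb : Monotone fun t => m * t + 1 := fun a b h => by simp only; gcongr
  refine card_filter_BSeq_succ hb monotone_const (fun _ => le_rfl) (fun _ => le_add_self)
    (fun f => by rw [freq_reachInsert_const, if_neg (by omega), add_zero]) (fun q hq _ => ?_)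
  have h0 := (mem_BSeq.1 hq).2 0
  exact ⟨0, fun t ht => absurd ht (Fin.not_lt_zero t), by
    simp only [Fin.val_zero, mul_zero, zero_add] at h0; omega⟩

lemma card_shiftedLuck_ge (s : ℕ) :
    #{q ∈ shiftedPK m c (d + s) | s ≤ shiftedLuck m c q} = #(shiftedPK m (c + s) d) := by
  induction s generalizing c with
  | zero => simp
  | succ s ih => rw [← add_assoc, card_shiftedLuck_succ, ih, add_right_comm, add_assoc]

lemma card_freq_ge {k : ℕ} (hk : 1 ≤ k) (hkm : k ≤ m) (hc : 1 ≤ c) (j : ℕ) :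
    #{q ∈ shiftedPK m c (d + j) | j ≤ freq k q} = #(shiftedPK m (c + j) d) := by
  induction j generalizing c with
  | zero => simp
  | succ j ih =>
    rw [← add_assoc, card_freq_succ hk hkm hc, ih (by omega), add_right_comm, add_assoc]

lemma card_PK_luck_ge (s : ℕ) :
    #{p ∈ PK m (d + s) | s ≤ luck m p} = #(shiftedPK m s d) := by
  simpa [shiftedPK_zero, shiftedLuck_zero] using card_shiftedLuck_ge (m := m) (c := 0) (d := d) s

lemma card_freq_ge_eq_card_luck_ge {k n : ℕ} (hk : 2 ≤ k) (hkm : k ≤ m) (hn : 1 ≤ n) (j : ℕ) :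
    #{p ∈ PK m n | j ≤ freq k p} = #{p ∈ PK m n | j + 1 ≤ luck m p} := by
  obtain ⟨d, rfl⟩ := Nat.exists_eq_add_of_le' hn
  rw [card_PK_freq_succ hk]
  rcases le_or_gt j d with hj | hj
  · obtain ⟨e, rfl⟩ := Nat.exists_eq_add_of_le' hj
    rw [card_freq_ge (by omega) hkm le_rfl, add_assoc, card_PK_luck_ge, add_comm]
  · have hfreq (f : Fin d → ℕ) : freq k f < j := (card_le_univ _).trans_lt (by simpa using hj)
    have hluck (p : Fin (d + 1) → ℕ) : luck m p < j + 1 :=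
      (card_le_univ _).trans_lt (by simpa using hj)
    rw [filter_false_of_mem fun f _ => (hfreq f).not_ge,
      filter_false_of_mem fun p _ => (hluck p).not_ge, card_empty, card_empty]

end Shifted

end UParking

theorem stmt19_general (m : ℕ) (n : ℕ) (hn : 1 ≤ n) (k : ℕ) (hk2 : 2 ≤ k)
    (hkm : k ≤ m) (j : ℕ) :
    ((PK m n).filter (fun p => freq k p = j)).card =
      ((PK m n).filter (fun p => luck m p = j + 1)).card := by
  have h₀ := UParking.card_freq_ge_eq_card_luck_ge hk2 hkm hn j
  have h₁ := UParking.card_freq_ge_eq_card_luck_ge hk2 hkm hn (j + 1)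
  rw [Finset.card_filter_le_eq_add _ (freq k) j,
    Finset.card_filter_le_eq_add _ (luck m) (j + 1)] at h₀
  omega

theorem stmt19 (m : ℕ) (hm : 2 ≤ m) (n : ℕ) (hn : 1 ≤ n) (k : ℕ) (hk2 : 2 ≤ k)
    (hkm : k ≤ m) (j : ℕ) :
    ((PK m n).filter (fun p => freq k p = j)).card =
      ((PK m n).filter (fun p => luck m p = j + 1)).card :=
  stmt19_general m n hn k hk2 hkm j

end
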